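/- arXiv:1406.0013 — 3 statements merged into one kernel-verified Lean document; each statement's English description precedes it below -/
import Mathlib

section
/- Fix x ∈ ℝ^d. Then lim_{ε→0⁺} ε^{−1}·∫ a_ε(x,y)·f(y) dy = m₂·( w(x)·∇f(x) + ½·f(x)·(∇·w)(x) ); that is, the antisymmetric part of the kernel contributes exactly the advection term and the divergence term at first order in ε. -/
open MeasureTheory Filter Set
open scoped InnerProductSpace Topology

noncomputable section

/-- Euclidean space `ℝ^d`. -/
abbrev E (d : ℕ) := EuclideanSpace ℝ (Fin d)

/-- The rescaled symmetric kernel `h_ε(x,y) = ε^{-d/2} h(‖y-x‖²/ε)`. -/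
def hker (d : ℕ) (h : ℝ → ℝ) (ε : ℝ) (x y : E d) : ℝ :=
  ε ^ (-(d : ℝ) / 2) * h (‖y - x‖ ^ 2 / ε)

/-- The Euclidean Laplacian `Δ f(x) = ∑ᵢ ∂²f/∂xᵢ²`. -/
def lap {d : ℕ} (f : E d → ℝ) (x : E d) : ℝ :=
  ∑ i, fderiv ℝ (fun z => fderiv ℝ f z (EuclideanSpace.single i 1)) x (EuclideanSpace.single i 1)

/-- The divergence `∇·w (x) = ∑ᵢ ∂wᵢ/∂xᵢ`. -/
def divg {d : ℕ} (w : E d → E d) (x : E d) : ℝ :=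
  ∑ i, fderiv ℝ w x (EuclideanSpace.single i 1) i

/-- The antisymmetric kernel part `a_ε(x,y) = ½(w(x)+w(y))·(y-x)·h_ε(x,y)`. -/
def aker (d : ℕ) (h : ℝ → ℝ) (w : E d → E d) (ε : ℝ) (x y : E d) : ℝ :=
  ((1 : ℝ) / 2) * ⟪w x + w y, y - x⟫_ℝ * hker d h ε x y

/-!
Put `s = √ε` and substitute `y = x + s • u`. Then `ε⁻¹ ∫ a_ε(x,y) f(y) dy = s⁻¹ I(s)` with
`I(s) = ∫ G(s,u) h(‖u‖²) du` and `G(s,u) = ½ ⟪w x + w (x + s u), u⟫ f(x + s u)`. Since `G(0,·)` is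
odd, `I(0) = 0`, so the limit is `I'(0)`. Differentiating under the integral sign is justified by
the domination `|∂ₛG(s,u)| ≲ ‖u‖²`. The integrand of `I'(0)` is
`⟪w x, u⟫ ⟪∇f x, u⟫ + ½ f(x) ⟪Dw(x) u, u⟫`, and the second moments `∫ uᵢ uⱼ h(‖u‖²) du = m₂ δᵢⱼ`
of the radial weight turn it into `m₂ (w·∇f + ½ f ∇·w)`.
-/

lemma tendsto_inv_sqrt_mul_of_hasDerivAt {I : ℝ → ℝ} {D : ℝ} (hI : HasDerivAt I D 0)
    (hI₀ : I 0 = 0) : Tendsto (fun ε => (√ε)⁻¹ * I √ε) (𝓝[>] 0) (𝓝 D) := by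
  have h_sqrt : Tendsto Real.sqrt (𝓝[>] 0) (𝓝[>] 0) :=
    tendsto_nhdsWithin_of_tendsto_nhds_of_eventually_within _
      (by simpa using (Real.continuous_sqrt.tendsto 0).mono_left nhdsWithin_le_nhds)
      (eventually_nhdsWithin_of_forall fun _ hε => Real.sqrt_pos.2 hε)
  simpa [hI₀, Function.comp_def] using hI.tendsto_slope_zero_right.comp h_sqrt

section Radial

variable {V : Type*} [NormedAddCommGroup V] [InnerProductSpace ℝ V] [FiniteDimensional ℝ V]
  [MeasurableSpace V] [BorelSpace V]

lemma integrable_exp_neg_mul_sq_norm {b : ℝ} (hb : 0 < b) :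
    Integrable fun v : V => Real.exp (-b * ‖v‖ ^ 2) :=
  Integrable.of_integral_ne_zero <| by
    rw [GaussianFourier.integral_rexp_neg_mul_sq_norm hb]; positivity

lemma integrable_norm_pow_mul_exp_neg_mul_sq_norm (k : ℕ) {b : ℝ} (hb : 0 < b) :
    Integrable fun v : V => ‖v‖ ^ k * Real.exp (-b * ‖v‖ ^ 2) := by
  set B : ℝ := k.factorial * (2 / b) ^ k
  refine ((integrable_exp_neg_mul_sq_norm hb).add
    ((integrable_exp_neg_mul_sq_norm (half_pos hb)).const_mul B)).mono' (by fun_prop)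
    (Eventually.of_forall fun v => ?_)
  have hpow : ‖v‖ ^ k ≤ 1 + (‖v‖ ^ 2) ^ k := by
    rcases le_total ‖v‖ 1 with hv | hv
    · linarith [pow_le_one₀ (n := k) (norm_nonneg v) hv, pow_nonneg (sq_nonneg ‖v‖) k]
    · rw [← pow_mul]
      linarith [pow_le_pow_right₀ hv (by omega : k ≤ 2 * k)]
  have hexp : (‖v‖ ^ 2) ^ k ≤ B * Real.exp (b / 2 * ‖v‖ ^ 2) := by
    have := Real.pow_div_factorial_le_exp (x := b / 2 * ‖v‖ ^ 2) (by positivity) k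
    rw [div_le_iff₀ (by positivity), mul_pow] at this
    calc (‖v‖ ^ 2) ^ k = (2 / b) ^ k * ((b / 2) ^ k * (‖v‖ ^ 2) ^ k) := by
          rw [← mul_assoc, ← mul_pow, div_mul_div_comm, mul_comm 2 b, div_self (by positivity),
            one_pow, one_mul]
      _ ≤ (2 / b) ^ k * (Real.exp (b / 2 * ‖v‖ ^ 2) * k.factorial) := by gcongr
      _ = B * Real.exp (b / 2 * ‖v‖ ^ 2) := by ring
  rw [Real.norm_of_nonneg (by positivity)]
  calc ‖v‖ ^ k * Real.exp (-b * ‖v‖ ^ 2)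
      ≤ (1 + B * Real.exp (b / 2 * ‖v‖ ^ 2)) * Real.exp (-b * ‖v‖ ^ 2) := by gcongr; linarith
    _ = Real.exp (-b * ‖v‖ ^ 2) + B * Real.exp (-(b / 2) * ‖v‖ ^ 2) := by
        rw [add_mul, one_mul, mul_assoc, ← Real.exp_add]; ring_nf

variable {h : ℝ → ℝ}

lemma integrable_norm_pow_mul_of_le_exp (k : ℕ) (h_nonneg : ∀ u, 0 ≤ h u)
    (h_meas : Measurable h) {C c : ℝ} (hc : 0 < c)
    (h_decay : ∀ u : ℝ, 0 ≤ u → h u ≤ C * Real.exp (-c * u)) :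
    Integrable fun v : V => ‖v‖ ^ k * h (‖v‖ ^ 2) := by
  refine ((integrable_norm_pow_mul_exp_neg_mul_sq_norm k hc).const_mul C).mono'
    ((by fun_prop : Continuous fun v : V => ‖v‖ ^ k).aestronglyMeasurable.mul
      (h_meas.comp (by fun_prop)).aestronglyMeasurable)
    (Eventually.of_forall fun v => ?_)
  rw [Real.norm_of_nonneg (mul_nonneg (by positivity) (h_nonneg _)), mul_left_comm]
  gcongr
  exact h_decay _ (by positivity)

lemma integrable_mul_radial_of_abs_le {k : ℕ}
    (h_int : Integrable fun v : V => ‖v‖ ^ k * h (‖v‖ ^ 2)) (h_meas : Measurable h)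
    {g : V → ℝ} (hg : AEStronglyMeasurable g) {K : ℝ} (hgK : ∀ v, |g v| ≤ K * ‖v‖ ^ k) :
    Integrable fun v => g v * h (‖v‖ ^ 2) := by
  refine (h_int.norm.const_mul K).mono'
    (hg.mul (h_meas.comp (by fun_prop)).aestronglyMeasurable) (Eventually.of_forall fun v => ?_)
  rw [norm_mul, norm_mul, Real.norm_eq_abs, norm_pow, norm_norm, ← mul_assoc]
  gcongr
  exact hgK v

end Radial

section Moments

variable {d : ℕ} (h : ℝ → ℝ)

lemma integral_coord_mul_coord_radial_of_ne {i j : Fin d} (hij : i ≠ j) :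
    ∫ u : E d, u i * u j * h (‖u‖ ^ 2) = 0 := by
  classical
  let R : E d ≃ₗᵢ[ℝ] E d := LinearIsometryEquiv.piLpCongrRight 2
    fun k => if k = i then LinearIsometryEquiv.neg ℝ else LinearIsometryEquiv.refl ℝ ℝ
  have hR : ∀ u : E d, R u i * R u j * h (‖R u‖ ^ 2) = -(u i * u j * h (‖u‖ ^ 2)) := by
    intro u
    have hRk : ∀ k, R u k = if k = i then -u k else u k := fun k => by
      change (if k = i then LinearIsometryEquiv.neg ℝ else LinearIsometryEquiv.refl ℝ ℝ) (u k) = _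
      split_ifs <;> rfl
    rw [hRk, hRk, R.norm_map, if_pos rfl, if_neg hij.symm]
    ring
  have := integral_comp R fun u : E d => u i * u j * h (‖u‖ ^ 2)
  simp only [hR, integral_neg] at this
  linarith

lemma integral_coord_sq_radial (i j : Fin d) :
    ∫ u : E d, u i ^ 2 * h (‖u‖ ^ 2) = ∫ u : E d, u j ^ 2 * h (‖u‖ ^ 2) := by
  classical
  let S : E d ≃ₗᵢ[ℝ] E d := LinearIsometryEquiv.piLpCongrLeft 2 ℝ ℝ (Equiv.swap i j)
  have hS : ∀ u : E d, S u j = u i := fun u => by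
    change u ((Equiv.swap i j).symm j) = u i
    rw [Equiv.symm_swap, Equiv.swap_apply_right]
  simpa only [hS, S.norm_map] using integral_comp S fun u : E d => u j ^ 2 * h (‖u‖ ^ 2)

variable {h} (h_meas : Measurable h) (h_int : Integrable fun u : E d => ‖u‖ ^ 2 * h (‖u‖ ^ 2))
include h_meas h_int

lemma integrable_inner_mul_inner_radial (v y : E d) :
    Integrable fun u : E d => ⟪v, u⟫_ℝ * ⟪y, u⟫_ℝ * h (‖u‖ ^ 2) := by
  refine integrable_mul_radial_of_abs_le h_int h_meas (by fun_prop) (K := ‖v‖ * ‖y‖) fun u => ?_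
  rw [abs_mul, sq, mul_mul_mul_comm]
  exact mul_le_mul (abs_real_inner_le_norm _ _) (abs_real_inner_le_norm _ _) (abs_nonneg _)
    (by positivity)

lemma integrable_inner_map_radial (A : E d →L[ℝ] E d) :
    Integrable fun u : E d => ⟪A u, u⟫_ℝ * h (‖u‖ ^ 2) := by
  refine integrable_mul_radial_of_abs_le h_int h_meas (by fun_prop) (K := ‖A‖) fun u => ?_
  rw [sq, ← mul_assoc]
  exact (abs_real_inner_le_norm _ _).trans (by gcongr; exact A.le_opNorm u)

lemma integral_inner_mul_inner_radial (i : Fin d) (v y : E d) :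
    ∫ u : E d, ⟪v, u⟫_ℝ * ⟪y, u⟫_ℝ * h (‖u‖ ^ 2)
      = (∫ u : E d, u i ^ 2 * h (‖u‖ ^ 2)) * ⟪v, y⟫_ℝ := by
  have h_coord : ∀ k l : Fin d, Integrable fun u : E d => u k * u l * h (‖u‖ ^ 2) :=
    fun k l => integrable_mul_radial_of_abs_le h_int h_meas (by fun_prop) (K := 1) fun u => by
      rw [abs_mul, one_mul, sq]
      exact mul_le_mul (PiLp.norm_apply_le u k)
        (PiLp.norm_apply_le u l) (abs_nonneg _) (norm_nonneg _)
  have h_expand : ∀ u : E d, ⟪v, u⟫_ℝ * ⟪y, u⟫_ℝ * h (‖u‖ ^ 2)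
      = ∑ k, ∑ l, v k * y l * (u k * u l * h (‖u‖ ^ 2)) := fun u => by
    simp only [PiLp.inner_apply, RCLike.inner_apply, conj_trivial]
    rw [Finset.sum_mul_sum]
    simp only [Finset.sum_mul]
    exact Finset.sum_congr rfl fun _ _ => Finset.sum_congr rfl fun _ _ => by ring
  simp_rw [h_expand]
  rw [integral_finsetSum _ fun k _ => integrable_finsetSum _ fun l _ => (h_coord k l).const_mul _]
  simp only [PiLp.inner_apply, RCLike.inner_apply, conj_trivial, Finset.mul_sum]
  refine Finset.sum_congr rfl fun k _ => ?_
  rw [integral_finsetSum _ fun l _ => (h_coord k l).const_mul _,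
    Finset.sum_eq_single k (fun l _ hlk => by
      rw [integral_const_mul, integral_coord_mul_coord_radial_of_ne h (Ne.symm hlk), mul_zero])
      (by simp),
    integral_const_mul, integral_coord_sq_radial h i k]
  simp only [← sq]
  ring

lemma integral_inner_map_radial (i : Fin d) (A : E d →L[ℝ] E d) :
    ∫ u : E d, ⟪A u, u⟫_ℝ * h (‖u‖ ^ 2)
      = (∫ u : E d, u i ^ 2 * h (‖u‖ ^ 2)) * ∑ j, A (EuclideanSpace.single j 1) j := by
  classical
  have h_expand : ∀ u : E d, ⟪A u, u⟫_ℝ * h (‖u‖ ^ 2)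
      = ∑ j, ⟪EuclideanSpace.single j 1, u⟫_ℝ * ⟪A (EuclideanSpace.single j 1), u⟫_ℝ
          * h (‖u‖ ^ 2) := fun u => by
    have hAu : A u = ∑ j, u j • A (EuclideanSpace.single j 1) := by
      conv_lhs => rw [← (EuclideanSpace.basisFun (Fin d) ℝ).sum_repr u]
      simp [map_sum]
    simp only [hAu, sum_inner, real_inner_smul_left, Finset.sum_mul,
      EuclideanSpace.inner_single_left, conj_trivial, one_mul]
  simp_rw [h_expand]
  rw [integral_finsetSum _ fun j _ => integrable_inner_mul_inner_radial h_meas h_int _ _,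
    Finset.mul_sum]
  refine Finset.sum_congr rfl fun j _ => ?_
  rw [integral_inner_mul_inner_radial h_meas h_int i, EuclideanSpace.inner_single_left]
  simp

end Moments

section Profile

variable {d : ℕ} (w : E d → E d) (f : E d → ℝ) (x : E d)

/-- `aker` in the blown-up variable `y = x + s • u`, without the factor `s ^ (1 - d) h (‖u‖²)`. -/
def akerProfile (s : ℝ) (u : E d) : ℝ :=
  1 / 2 * ⟪w x + w (x + s • u), u⟫_ℝ * f (x + s • u)

def akerProfileDeriv (s : ℝ) (u : E d) : ℝ :=
  1 / 2 * (⟪fderiv ℝ w (x + s • u) u, u⟫_ℝ * f (x + s • u)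
    + ⟪w x + w (x + s • u), u⟫_ℝ * fderiv ℝ f (x + s • u) u)

lemma integral_aker_mul_eq (h : ℝ → ℝ) {ε : ℝ} (hε : 0 < ε) :
    ε⁻¹ * ∫ y, aker d h w ε x y * f y
      = (√ε)⁻¹ * ∫ u, akerProfile w f x √ε u * h (‖u‖ ^ 2) := by
  set s := √ε
  have hs : 0 < s := Real.sqrt_pos.2 hε
  have hε_eq : ε = s ^ 2 := (Real.sq_sqrt hε.le).symm
  have h_scale : ε ^ (-(d : ℝ) / 2) = (s ^ d)⁻¹ := by
    rw [hε_eq, ← Real.rpow_natCast_mul hs.le, Nat.cast_ofNat,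
      show (2 : ℝ) * (-(d : ℝ) / 2) = -(d : ℕ) by ring, Real.rpow_neg hs.le, Real.rpow_natCast]
  have h_pointwise : ∀ u : E d, aker d h w ε x (x + s • u) * f (x + s • u)
      = s * (s ^ d)⁻¹ * (akerProfile w f x s u * h (‖u‖ ^ 2)) := fun u => by
    have h_arg : ‖s • u‖ ^ 2 / ε = ‖u‖ ^ 2 := by
      rw [norm_smul, Real.norm_of_nonneg hs.le, hε_eq]; field_simp
    rw [aker, hker, add_sub_cancel_left, h_arg, h_scale, real_inner_smul_right, akerProfile]
    ring
  have h_change : ∫ y, aker d h w ε x y * f y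
      = s ^ d * ∫ u, aker d h w ε x (x + s • u) * f (x + s • u) := by
    rw [← integral_add_left_eq_self _ x,
      Measure.integral_comp_smul_of_nonneg volume (fun v => aker d h w ε x (x + v) * f (x + v)) s
        (hR := hs.le), finrank_euclideanSpace_fin, smul_eq_mul, ← mul_assoc,
      mul_inv_cancel₀ (by positivity), one_mul]
  simp_rw [h_change, h_pointwise, integral_const_mul]
  field_simp
  rw [hε_eq]

lemma integral_akerProfile_zero (h : ℝ → ℝ) :
    ∫ u, akerProfile w f x 0 u * h (‖u‖ ^ 2) = 0 := by
  have hodd : ∀ u : E d, akerProfile w f x 0 (-u) * h (‖-u‖ ^ 2)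
      = -(akerProfile w f x 0 u * h (‖u‖ ^ 2)) := fun u => by
    simp only [akerProfile, zero_smul, add_zero, inner_neg_right, norm_neg]
    ring
  have := integral_neg_eq_self (fun u : E d => akerProfile w f x 0 u * h (‖u‖ ^ 2)) volume
  simp only [hodd, integral_neg] at this
  linarith

lemma integral_akerProfileDeriv_zero {h : ℝ → ℝ} (h_meas : Measurable h)
    (h_int : Integrable fun u : E d => ‖u‖ ^ 2 * h (‖u‖ ^ 2)) (i : Fin d) :
    ∫ u, akerProfileDeriv w f x 0 u * h (‖u‖ ^ 2)
      = (∫ u : E d, u i ^ 2 * h (‖u‖ ^ 2)) * (⟪w x, gradient f x⟫_ℝ + 1 / 2 * f x * divg w x) := by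
  have h_split : ∀ u : E d, akerProfileDeriv w f x 0 u * h (‖u‖ ^ 2)
      = 1 / 2 * f x * (⟪fderiv ℝ w x u, u⟫_ℝ * h (‖u‖ ^ 2))
        + ⟪w x, u⟫_ℝ * ⟪gradient f x, u⟫_ℝ * h (‖u‖ ^ 2) := fun u => by
    simp only [akerProfileDeriv, zero_smul, add_zero, inner_gradient_left, inner_add_left]
    ring
  have h_quad := integral_inner_map_radial h_meas h_int i (fderiv ℝ w x)
  have h_bilin := integral_inner_mul_inner_radial h_meas h_int i (w x) (gradient f x)
  simp_rw [h_split]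
  rw [integral_add, integral_const_mul, h_quad, h_bilin, divg]
  · ring
  · exact (integrable_inner_map_radial h_meas h_int _).const_mul _
  · exact integrable_inner_mul_inner_radial h_meas h_int _ _

variable {w f}

lemma hasDerivAt_akerProfile (hw : Differentiable ℝ w) (hf : Differentiable ℝ f) (s : ℝ)
    (u : E d) : HasDerivAt (akerProfile w f x · u) (akerProfileDeriv w f x s u) s := by
  have hline : HasDerivAt (fun σ : ℝ => x + σ • u) u s := by
    simpa using ((hasDerivAt_id s).smul_const u).const_add x
  have hw' := ((hw _).hasFDerivAt.comp_hasDerivAt s hline).const_add (w x)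
  have hf' := (hf _).hasFDerivAt.comp_hasDerivAt s hline
  refine (((hw'.inner ℝ (hasDerivAt_const s u)).const_mul (1 / 2 : ℝ)).mul hf').congr_deriv ?_
  simp only [akerProfileDeriv, inner_zero_right, zero_add, Function.comp_apply]
  ring

lemma abs_akerProfileDeriv_le {W₀ W₁ F₀ F₁ : ℝ} (hW₀ : ∀ y, ‖w y‖ ≤ W₀)
    (hW₁ : ∀ y, ‖fderiv ℝ w y‖ ≤ W₁) (hF₀ : ∀ y, ‖f y‖ ≤ F₀) (hF₁ : ∀ y, ‖fderiv ℝ f y‖ ≤ F₁)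
    (s : ℝ) (u : E d) :
    |akerProfileDeriv w f x s u| ≤ (W₁ * F₀ / 2 + W₀ * F₁) * ‖u‖ ^ 2 := by
  set y := x + s • u
  have hw_inner : |⟪w x + w y, u⟫_ℝ| ≤ 2 * W₀ * ‖u‖ :=
    (abs_real_inner_le_norm _ _).trans <| by
      gcongr; linarith [norm_add_le (w x) (w y), hW₀ x, hW₀ y]
  have hDw_inner : |⟪fderiv ℝ w y u, u⟫_ℝ| ≤ W₁ * ‖u‖ * ‖u‖ :=
    (abs_real_inner_le_norm _ _).trans <| by
      gcongr; exact (fderiv ℝ w y).le_of_opNorm_le (hW₁ y) u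
  have hDf : |fderiv ℝ f y u| ≤ F₁ * ‖u‖ := (fderiv ℝ f y).le_of_opNorm_le (hF₁ y) u
  have hf : |f y| ≤ F₀ := hF₀ y
  unfold akerProfileDeriv
  calc |1 / 2 * (⟪fderiv ℝ w y u, u⟫_ℝ * f y + ⟪w x + w y, u⟫_ℝ * fderiv ℝ f y u)|
      ≤ 1 / 2 * (|⟪fderiv ℝ w y u, u⟫_ℝ| * |f y| + |⟪w x + w y, u⟫_ℝ| * |fderiv ℝ f y u|) := by
        rw [abs_mul, abs_of_pos one_half_pos, ← abs_mul, ← abs_mul]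
        gcongr
        exact abs_add_le _ _
    _ ≤ 1 / 2 * (W₁ * ‖u‖ * ‖u‖ * F₀ + 2 * W₀ * ‖u‖ * (F₁ * ‖u‖)) := by
        gcongr 1 / 2 * (?_ + ?_)
        · exact mul_le_mul hDw_inner hf (abs_nonneg _) ((abs_nonneg _).trans hDw_inner)
        · exact mul_le_mul hw_inner hDf (abs_nonneg _) ((abs_nonneg _).trans hw_inner)
    _ = (W₁ * F₀ / 2 + W₀ * F₁) * ‖u‖ ^ 2 := by ring

lemma hasDerivAt_integral_akerProfile {h : ℝ → ℝ} (hw : Differentiable ℝ w)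
    (hf : Differentiable ℝ f) {W₀ W₁ F₀ F₁ : ℝ} (hW₀ : ∀ y, ‖w y‖ ≤ W₀)
    (hW₁ : ∀ y, ‖fderiv ℝ w y‖ ≤ W₁) (hF₀ : ∀ y, ‖f y‖ ≤ F₀) (hF₁ : ∀ y, ‖fderiv ℝ f y‖ ≤ F₁)
    (h_meas : Measurable h)
    (h_int₁ : Integrable fun u : E d => ‖u‖ ^ 1 * h (‖u‖ ^ 2))
    (h_int₂ : Integrable fun u : E d => ‖u‖ ^ 2 * h (‖u‖ ^ 2)) :
    HasDerivAt (fun s => ∫ u, akerProfile w f x s u * h (‖u‖ ^ 2))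
      (∫ u, akerProfileDeriv w f x 0 u * h (‖u‖ ^ 2)) 0 := by
  have hw_cont := hw.continuous
  have hf_cont := hf.continuous
  have h_radial : AEStronglyMeasurable fun u : E d => h (‖u‖ ^ 2) :=
    (h_meas.comp (by fun_prop)).aestronglyMeasurable
  refine (hasDerivAt_integral_of_dominated_loc_of_deriv_le (x₀ := (0 : ℝ)) (s := univ)
    (F' := fun s u => akerProfileDeriv w f x s u * h (‖u‖ ^ 2))
    (bound := fun u => (W₁ * F₀ / 2 + W₀ * F₁) * ‖‖u‖ ^ 2 * h (‖u‖ ^ 2)‖) univ_mem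
    (Eventually.of_forall fun s => ?_) ?_ ?_ ?_ (h_int₂.norm.const_mul _) ?_).2
  · exact (by unfold akerProfile; fun_prop : Continuous _).aestronglyMeasurable.mul h_radial
  · refine integrable_mul_radial_of_abs_le h_int₁ h_meas
      (by unfold akerProfile; fun_prop : Continuous _).aestronglyMeasurable
      (K := 1 / 2 * ‖w x + w x‖ * ‖f x‖) fun u => ?_
    simp only [akerProfile, zero_smul, add_zero, abs_mul, pow_one,
      abs_of_pos (one_half_pos : (0 : ℝ) < 1 / 2)]
    calc 1 / 2 * |⟪w x + w x, u⟫_ℝ| * |f x| ≤ 1 / 2 * (‖w x + w x‖ * ‖u‖) * |f x| := by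
          gcongr; exact abs_real_inner_le_norm _ _
      _ = _ := by rw [Real.norm_eq_abs]; ring
  · refine (Continuous.aestronglyMeasurable ?_).mul h_radial
    unfold akerProfileDeriv
    simp only [zero_smul, add_zero]
    fun_prop
  · refine Eventually.of_forall fun u s _ => ?_
    rw [norm_mul, norm_mul, norm_pow, norm_norm, Real.norm_eq_abs, ← mul_assoc]
    gcongr
    exact abs_akerProfileDeriv_le x hW₀ hW₁ hF₀ hF₁ s u
  · exact Eventually.of_forall fun u s _ => (hasDerivAt_akerProfile x hw hf s u).mul_const _

end Profile

theorem stmt2_general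
    (d : ℕ) (hd : 0 < d)
    (h : ℝ → ℝ) (h_nonneg : ∀ u, 0 ≤ h u) (h_cont : Continuous h)
    (C c : ℝ) (hc : 0 < c)
    (h_decay : ∀ u : ℝ, 0 ≤ u → h u ≤ C * Real.exp (-c * u))
    (m₂ : ℝ)
    (hm₂ : m₂ = ∫ u : E d, (u ⟨0, hd⟩) ^ 2 * h (‖u‖ ^ 2))
    (w : E d → E d) (hw : ContDiff ℝ (⊤ : ℕ∞) w)
    (hw_bdd : ∀ n : ℕ, ∃ M, ∀ x, ‖iteratedFDeriv ℝ n w x‖ ≤ M)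
    (f : E d → ℝ) (hf : ContDiff ℝ 3 f)
    (hf_bdd : ∀ n : ℕ, n ≤ 3 → ∃ M, ∀ x, ‖iteratedFDeriv ℝ n f x‖ ≤ M)
    (x : E d) :
    Tendsto (fun ε : ℝ => ε⁻¹ * ∫ y, aker d h w ε x y * f y) (𝓝[>] (0 : ℝ))
      (𝓝 (m₂ * (⟪w x, gradient f x⟫_ℝ + (1 / 2) * f x * divg w x))) := by
  obtain ⟨W₀, hW₀⟩ := hw_bdd 0
  obtain ⟨W₁, hW₁⟩ := hw_bdd 1
  obtain ⟨F₀, hF₀⟩ := hf_bdd 0 (by norm_num)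
  obtain ⟨F₁, hF₁⟩ := hf_bdd 1 (by norm_num)
  simp only [norm_iteratedFDeriv_zero, norm_iteratedFDeriv_one] at hW₀ hW₁ hF₀ hF₁
  have h_int : ∀ k, Integrable fun u : E d => ‖u‖ ^ k * h (‖u‖ ^ 2) :=
    fun k => integrable_norm_pow_mul_of_le_exp k h_nonneg h_cont.measurable hc h_decay
  have h_deriv := hasDerivAt_integral_akerProfile x (hw.differentiable (by simp))
    (hf.differentiable (by norm_num)) hW₀ hW₁ hF₀ hF₁ h_cont.measurable (h_int 1) (h_int 2)
  rw [hm₂, ← integral_akerProfileDeriv_zero w f x h_cont.measurable (h_int 2)]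
  refine (tendsto_inv_sqrt_mul_of_hasDerivAt h_deriv
    (integral_akerProfile_zero w f x h)).congr' ?_
  filter_upwards [self_mem_nhdsWithin] with ε hε
  exact (integral_aker_mul_eq w f x h hε).symm

/-- The antisymmetric part contributes the advection and divergence
terms at first order:
`lim_{ε→0⁺} ε⁻¹ ∫ a_ε(x,y) f(y) dy = m₂ (w(x)·∇f(x) + ½ f(x) ∇·w(x))`. -/
theorem stmt2
    (d : ℕ) (hd : 0 < d)
    (h : ℝ → ℝ) (h_nonneg : ∀ u, 0 ≤ h u) (h_cont : Continuous h)
    (C c : ℝ) (hC : 0 < C) (hc : 0 < c)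
    (h_decay : ∀ u : ℝ, 0 ≤ u → h u ≤ C * Real.exp (-c * u))
    (m₀ m₂ : ℝ)
    (hm₀ : m₀ = ∫ u : E d, h (‖u‖ ^ 2))
    (hm₂ : m₂ = ∫ u : E d, (u ⟨0, hd⟩) ^ 2 * h (‖u‖ ^ 2))
    (hm₀_pos : 0 < m₀)
    (w : E d → E d) (hw : ContDiff ℝ (⊤ : ℕ∞) w)
    (hw_bdd : ∀ n : ℕ, ∃ M, ∀ x, ‖iteratedFDeriv ℝ n w x‖ ≤ M)
    (f : E d → ℝ) (hf : ContDiff ℝ 3 f)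
    (hf_bdd : ∀ n : ℕ, n ≤ 3 → ∃ M, ∀ x, ‖iteratedFDeriv ℝ n f x‖ ≤ M)
    (x : E d) :
    Tendsto (fun ε : ℝ => ε⁻¹ * ∫ y, aker d h w ε x y * f y) (𝓝[>] (0 : ℝ))
      (𝓝 (m₂ * (⟪w x, gradient f x⟫_ℝ + (1 / 2) * f x * divg w x))) :=
  stmt2_general d hd h h_nonneg h_cont C c hc h_decay m₂ hm₂ w hw hw_bdd f hf hf_bdd x
end
end

section
/- For every bounded continuous function f : ℝ^d → ℝ and every x ∈ ℝ^d, lim_{ε→0⁺} ∫ a_ε(x,y)·f(y) dy = 0. -/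
open MeasureTheory Filter Set
open scoped InnerProductSpace Topology

noncomputable section

/-!
The factor `y - x` in `a_ε(x, y)` is of size `√ε` where `h_ε(x, ·)` carries its mass:
`|a_ε(x, y)| ≤ ‖w‖_∞ C ε^{-d/2} ‖y - x‖ exp(-c‖y - x‖²/ε)`, and the substitution `y = x + √ε z`
turns the integral of the right-hand side into `√ε ‖w‖_∞ C ∫ ‖z‖ exp(-c‖z‖²) dz`. Hence
`∫ a_ε(x, y) f(y) dy = O(√ε)` for bounded `f`, with no cancellation from the antisymmetry needed.
-/

open Real

section GaussianMoment

variable {V : Type*} [NormedAddCommGroup V] [NormedSpace ℝ V] [FiniteDimensional ℝ V]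
  [MeasurableSpace V] [BorelSpace V] (μ : Measure V) [μ.IsAddHaarMeasure]

theorem integrable_norm_mul_exp_neg_mul_sq_norm {b : ℝ} (hb : 0 < b) :
    Integrable (fun v : V => ‖v‖ * exp (-b * ‖v‖ ^ 2)) μ := by
  rcases subsingleton_or_nontrivial V with hV | hV
  · simp [Subsingleton.elim _ (0 : V)]
  · rw [integrable_fun_norm_addHaar μ (f := fun t => t * exp (-b * t ^ 2))]
    refine (integrableOn_rpow_mul_exp_neg_mul_sq hb (s := Module.finrank ℝ V)
      (by linarith [(Module.finrank ℝ V).cast_nonneg (α := ℝ)])).congr_fun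
      (fun t _ => ?_) measurableSet_Ioi
    rw [smul_eq_mul, ← mul_assoc, ← pow_succ, Nat.sub_add_cancel Module.finrank_pos]
    simp only [rpow_natCast]

theorem integral_norm_sub_mul_exp_neg_mul_sq_div {c ε : ℝ} (hε : 0 < ε) (x : V) :
    ∫ y, ‖y - x‖ * exp (-c * (‖y - x‖ ^ 2 / ε)) ∂μ
      = √ε ^ (Module.finrank ℝ V + 1) * ∫ v, ‖v‖ * exp (-c * ‖v‖ ^ 2) ∂μ := by
  have hs : 0 < √ε := sqrt_pos.2 hε
  have hscale : ∀ v : V, ‖v‖ * exp (-c * (‖v‖ ^ 2 / ε))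
      = √ε * (‖(√ε)⁻¹ • v‖ * exp (-c * ‖(√ε)⁻¹ • v‖ ^ 2)) := by
    intro v
    rw [norm_smul, norm_inv, norm_of_nonneg hs.le, mul_pow, inv_pow, sq_sqrt hε.le]
    field_simp
  rw [integral_sub_right_eq_self (fun v => ‖v‖ * exp (-c * (‖v‖ ^ 2 / ε))) x]
  simp_rw [hscale]
  rw [integral_const_mul,
    Measure.integral_comp_inv_smul_of_nonneg μ (fun v => ‖v‖ * exp (-c * ‖v‖ ^ 2)) hs.le,
    smul_eq_mul, pow_succ]
  ring

end GaussianMoment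

theorem rpow_neg_div_two_mul_sqrt_pow_succ {ε : ℝ} (hε : 0 < ε) (n : ℕ) :
    ε ^ (-(n : ℝ) / 2) * √ε ^ (n + 1) = √ε := by
  rw [pow_succ, ← mul_assoc, sqrt_eq_rpow, ← rpow_natCast, ← rpow_mul hε.le, ← rpow_add hε,
    show -(n : ℝ) / 2 + 1 / 2 * n = 0 by ring, rpow_zero, one_mul]

theorem abs_half_inner_add_sub_le {V : Type*} [NormedAddCommGroup V] [InnerProductSpace ℝ V]
    {w : V → V} {M : ℝ} (hw : ∀ z, ‖w z‖ ≤ M) (x y : V) :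
    |1 / 2 * ⟪w x + w y, y - x⟫_ℝ| ≤ M * ‖y - x‖ := by
  have hsum : ‖w x + w y‖ ≤ 2 * M := (norm_add_le _ _).trans (by linarith [hw x, hw y])
  calc |1 / 2 * ⟪w x + w y, y - x⟫_ℝ| = 1 / 2 * |⟪w x + w y, y - x⟫_ℝ| := by
        rw [abs_mul, abs_of_pos one_half_pos]
    _ ≤ 1 / 2 * (‖w x + w y‖ * ‖y - x‖) := by gcongr; exact abs_real_inner_le_norm _ _
    _ ≤ 1 / 2 * (2 * M * ‖y - x‖) := by gcongr
    _ = M * ‖y - x‖ := by ring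

section Kernel

variable {d : ℕ} {h : ℝ → ℝ} {w : E d → E d} {C c ε : ℝ}

theorem abs_hker_le (hε : 0 < ε) (h_nonneg : ∀ u, 0 ≤ h u)
    (h_decay : ∀ u : ℝ, 0 ≤ u → h u ≤ C * exp (-c * u)) (x y : E d) :
    |hker d h ε x y| ≤ ε ^ (-(d : ℝ) / 2) * (C * exp (-c * (‖y - x‖ ^ 2 / ε))) := by
  have hpow : 0 < ε ^ (-(d : ℝ) / 2) := rpow_pos_of_pos hε _
  rw [hker, abs_mul, abs_of_pos hpow, abs_of_nonneg (h_nonneg _)]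
  exact mul_le_mul_of_nonneg_left (h_decay _ (by positivity)) hpow.le

theorem abs_aker_le {Mw : ℝ} (hε : 0 < ε) (h_nonneg : ∀ u, 0 ≤ h u)
    (h_decay : ∀ u : ℝ, 0 ≤ u → h u ≤ C * exp (-c * u)) (hw : ∀ z, ‖w z‖ ≤ Mw) (x y : E d) :
    |aker d h w ε x y|
      ≤ Mw * C * (ε ^ (-(d : ℝ) / 2) * (‖y - x‖ * exp (-c * (‖y - x‖ ^ 2 / ε)))) := by
  rw [aker, abs_mul]
  calc _ ≤ (Mw * ‖y - x‖) * (ε ^ (-(d : ℝ) / 2) * (C * exp (-c * (‖y - x‖ ^ 2 / ε)))) :=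
        mul_le_mul (abs_half_inner_add_sub_le hw x y) (abs_hker_le hε h_nonneg h_decay x y)
          (abs_nonneg _) (mul_nonneg ((norm_nonneg _).trans (hw x)) (norm_nonneg _))
    _ = _ := by ring

theorem norm_integral_aker_mul_le {f : E d → ℝ} {Mw Mf : ℝ} (hε : 0 < ε)
    (h_nonneg : ∀ u, 0 ≤ h u) (h_decay : ∀ u : ℝ, 0 ≤ u → h u ≤ C * exp (-c * u))
    (hc : 0 < c) (hw : ∀ z, ‖w z‖ ≤ Mw) (hf : ∀ y, |f y| ≤ Mf) (x : E d) :
    ‖∫ y, aker d h w ε x y * f y‖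
      ≤ Mw * C * Mf * (√ε * ∫ v : E d, ‖v‖ * exp (-c * ‖v‖ ^ 2)) := by
  set g : E d → ℝ := fun y => ‖y - x‖ * exp (-c * (‖y - x‖ ^ 2 / ε))
  have hg : Integrable g := by
    refine ((integrable_norm_mul_exp_neg_mul_sq_norm volume (div_pos hc hε)).comp_sub_right
      x).congr (.of_forall fun y => ?_)
    simp only [g]
    ring_nf
  have hbound : ∀ y, ‖aker d h w ε x y * f y‖ ≤ Mw * C * Mf * (ε ^ (-(d : ℝ) / 2) * g y) := by
    intro y
    have hker := abs_aker_le hε h_nonneg h_decay hw x y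
    rw [norm_mul, norm_eq_abs, norm_eq_abs]
    calc _ ≤ Mw * C * (ε ^ (-(d : ℝ) / 2) * g y) * Mf :=
          mul_le_mul hker (hf y) (abs_nonneg _) ((abs_nonneg _).trans hker)
      _ = _ := by ring
  calc _ ≤ ∫ y, Mw * C * Mf * (ε ^ (-(d : ℝ) / 2) * g y) :=
        norm_integral_le_of_norm_le ((hg.const_mul _).const_mul _) (.of_forall hbound)
    _ = _ := by
      rw [integral_const_mul, integral_const_mul, integral_norm_sub_mul_exp_neg_mul_sq_div _ hε,
        finrank_euclideanSpace_fin, ← mul_assoc (ε ^ _),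
        rpow_neg_div_two_mul_sqrt_pow_succ hε]

end Kernel

theorem stmt3_general
    (d : ℕ)
    (h : ℝ → ℝ) (h_nonneg : ∀ u, 0 ≤ h u)
    (C c : ℝ) (hc : 0 < c)
    (h_decay : ∀ u : ℝ, 0 ≤ u → h u ≤ C * Real.exp (-c * u))
    (w : E d → E d)
    (hw_bdd : ∀ n : ℕ, ∃ M, ∀ x, ‖iteratedFDeriv ℝ n w x‖ ≤ M)
    (f : E d → ℝ) (hf_bdd : ∃ M, ∀ y, |f y| ≤ M)
    (x : E d) :
    Tendsto (fun ε : ℝ => ∫ y, aker d h w ε x y * f y) (𝓝[>] (0 : ℝ)) (𝓝 0) := by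
  obtain ⟨Mw, hMw⟩ := hw_bdd 0
  obtain ⟨Mf, hMf⟩ := hf_bdd
  have hw : ∀ z, ‖w z‖ ≤ Mw := fun z => by simpa only [norm_iteratedFDeriv_zero] using hMw z
  set A := ∫ v : E d, ‖v‖ * exp (-c * ‖v‖ ^ 2)
  have hbound : Tendsto (fun ε : ℝ => Mw * C * Mf * (√ε * A)) (𝓝[>] 0) (𝓝 0) := by
    have hcont : Continuous (fun ε : ℝ => Mw * C * Mf * (√ε * A)) := by fun_prop
    simpa using (hcont.tendsto 0).mono_left nhdsWithin_le_nhds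
  refine squeeze_zero_norm' ?_ hbound
  filter_upwards [self_mem_nhdsWithin] with ε hε
  exact norm_integral_aker_mul_le hε h_nonneg h_decay hc hw hMf x

/-- For every bounded continuous `f` and every `x`,
`lim_{ε→0⁺} ∫ a_ε(x,y) f(y) dy = 0`. -/
theorem stmt3
    (d : ℕ) (hd : 0 < d)
    (h : ℝ → ℝ) (h_nonneg : ∀ u, 0 ≤ h u) (h_cont : Continuous h)
    (C c : ℝ) (hC : 0 < C) (hc : 0 < c)
    (h_decay : ∀ u : ℝ, 0 ≤ u → h u ≤ C * Real.exp (-c * u))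
    (w : E d → E d) (hw : ContDiff ℝ (⊤ : ℕ∞) w)
    (hw_bdd : ∀ n : ℕ, ∃ M, ∀ x, ‖iteratedFDeriv ℝ n w x‖ ≤ M)
    (f : E d → ℝ) (hf_cont : Continuous f) (hf_bdd : ∃ M, ∀ y, |f y| ≤ M)
    (x : E d) :
    Tendsto (fun ε : ℝ => ∫ y, aker d h w ε x y * f y) (𝓝[>] (0 : ℝ)) (𝓝 0) :=
  stmt3_general d h h_nonneg C c hc h_decay w hw_bdd f hf_bdd x
end
end

section
/- For every integer k ≥ 0 and every N > 0, lim_{ε→0⁺} ε^{−N}·∫_{‖u‖ ≥ ε^{1/3}} ε^{−d/2}·h(‖u‖²/ε)·‖u‖^k du = 0; i.e. the mass of the rescaled kernel outside a ball of radius ε^{1/3}, weighted by any fixed power of ‖u‖, vanishes faster than any power of ε (the localization estimate used to reduce integration over the manifold to integration over a tangent-space ball). -/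
open MeasureTheory Filter Set
open scoped InnerProductSpace Topology

noncomputable section

/-!
On the tail `ε ^ r ≤ ‖u‖` with `ε ≤ 1` one has `2 ‖u‖² / ε ≥ ε ^ (2r - 1) + ‖u‖²`, so the
exponential decay of `h` splits the integrand into the factor `exp (-(c/2) ε ^ (2r - 1))` and the
`ε`-independent integrable weight `‖u‖ ^ k exp (-(c/2) ‖u‖²)`. For `r < 1/2` that factor is
`exp (-(c/2) ε ^ (-(1 - 2r)))`, which beats every power of `ε` as `ε → 0⁺`.
-/

open Real

theorem rpow_two_mul_sub_one_add_sq_le {ε r x : ℝ} (hε : 0 < ε) (hε1 : ε ≤ 1)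
    (hx : ε ^ r ≤ x) : ε ^ (2 * r - 1) + x ^ 2 ≤ 2 * (x ^ 2 / ε) := by
  have h_rpow : ε ^ (2 * r - 1) ≤ x ^ 2 / ε := by
    rw [rpow_sub_one hε.ne', mul_comm, rpow_mul hε.le, rpow_two]
    gcongr
  have h_sq : x ^ 2 ≤ x ^ 2 / ε := le_div_self (sq_nonneg x) hε hε1
  linarith

theorem tendsto_rpow_neg_mul_exp_neg_mul_rpow_neg {q b : ℝ} (hq : 0 < q) (hb : 0 < b) (p : ℝ) :
    Tendsto (fun ε : ℝ => ε ^ (-p) * exp (-b * ε ^ (-q))) (𝓝[>] 0) (𝓝 0) := by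
  refine ((tendsto_rpow_mul_exp_neg_mul_atTop_nhds_zero (p / q) b hb).comp
    (tendsto_rpow_neg_nhdsGT_zero (neg_lt_zero.2 hq))).congr' ?_
  filter_upwards [self_mem_nhdsWithin] with ε (hε : 0 < ε)
  rw [Function.comp_apply, ← rpow_mul hε.le]
  field_simp

section Tail

variable {V : Type*} [NormedAddCommGroup V] [NormedSpace ℝ V] [FiniteDimensional ℝ V]
  [MeasurableSpace V] [BorelSpace V] (μ : Measure V) [μ.IsAddHaarMeasure]

theorem integrable_norm_pow_mul_exp_neg_mul_norm_sq {b : ℝ} (hb : 0 < b) (k : ℕ) :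
    Integrable (fun u : V => ‖u‖ ^ k * exp (-b * ‖u‖ ^ 2)) μ := by
  rcases subsingleton_or_nontrivial V with _ | _
  · have : CompactSpace V := Finite.compactSpace
    exact Integrable.of_subsingleton
  have hradial : IntegrableOn (fun y : ℝ => y ^ ((Module.finrank ℝ V - 1 + k : ℕ) : ℝ)
      * exp (-b * y ^ 2)) (Ioi 0) :=
    integrableOn_rpow_mul_exp_neg_mul_sq hb (neg_one_lt_zero.trans_le (Nat.cast_nonneg _))
  refine (integrable_fun_norm_addHaar μ (f := fun y => y ^ k * exp (-b * y ^ 2))).mpr ?_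
  refine hradial.congr_fun (fun y _ => ?_) measurableSet_Ioi
  simp only [rpow_natCast, smul_eq_mul, pow_add]
  ring

variable {h : ℝ → ℝ} {C c : ℝ} (hC : 0 ≤ C) (hc : 0 < c) (h_nonneg : ∀ t, 0 ≤ h t)
  (h_decay : ∀ t, 0 ≤ t → h t ≤ C * exp (-c * t)) (k : ℕ) (r : ℝ)
include hC hc h_nonneg h_decay

theorem setIntegral_norm_ge_rpow_le {ε : ℝ} (hε : 0 < ε) (hε1 : ε ≤ 1) :
    ∫ u in {u : V | ε ^ r ≤ ‖u‖}, h (‖u‖ ^ 2 / ε) * ‖u‖ ^ k ∂μ ≤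
      C * exp (-(c / 2) * ε ^ (2 * r - 1)) * ∫ u, ‖u‖ ^ k * exp (-(c / 2) * ‖u‖ ^ 2) ∂μ := by
  set A := C * exp (-(c / 2) * ε ^ (2 * r - 1))
  have hg := (integrable_norm_pow_mul_exp_neg_mul_norm_sq μ (half_pos hc) k).const_mul A
  have h_pointwise : ∀ u ∈ {u : V | ε ^ r ≤ ‖u‖},
      h (‖u‖ ^ 2 / ε) * ‖u‖ ^ k ≤ A * (‖u‖ ^ k * exp (-(c / 2) * ‖u‖ ^ 2)) := by
    intro u hu
    have h_exp : exp (-c * (‖u‖ ^ 2 / ε)) ≤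
        exp (-(c / 2) * ε ^ (2 * r - 1)) * exp (-(c / 2) * ‖u‖ ^ 2) := by
      rw [← exp_add, exp_le_exp]
      nlinarith [rpow_two_mul_sub_one_add_sq_le hε hε1 hu]
    calc h (‖u‖ ^ 2 / ε) * ‖u‖ ^ k ≤ C * exp (-c * (‖u‖ ^ 2 / ε)) * ‖u‖ ^ k := by
          gcongr
          exact h_decay _ (by positivity)
      _ ≤ C * (exp (-(c / 2) * ε ^ (2 * r - 1)) * exp (-(c / 2) * ‖u‖ ^ 2)) * ‖u‖ ^ k := by
          gcongr
      _ = A * (‖u‖ ^ k * exp (-(c / 2) * ‖u‖ ^ 2)) := by ring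
  calc ∫ u in {u : V | ε ^ r ≤ ‖u‖}, h (‖u‖ ^ 2 / ε) * ‖u‖ ^ k ∂μ
      ≤ ∫ u in {u : V | ε ^ r ≤ ‖u‖}, A * (‖u‖ ^ k * exp (-(c / 2) * ‖u‖ ^ 2)) ∂μ :=
        integral_mono_of_nonneg (ae_of_all _ fun u => by have := h_nonneg (‖u‖ ^ 2 / ε); positivity)
          hg.restrict (ae_restrict_of_forall_mem
            (isClosed_le continuous_const continuous_norm).measurableSet h_pointwise)
    _ ≤ ∫ u, A * (‖u‖ ^ k * exp (-(c / 2) * ‖u‖ ^ 2)) ∂μ :=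
        setIntegral_le_integral hg (ae_of_all _ fun u => by positivity)
    _ = A * ∫ u, ‖u‖ ^ k * exp (-(c / 2) * ‖u‖ ^ 2) ∂μ := integral_const_mul A _

theorem tendsto_rpow_neg_mul_setIntegral_norm_ge_rpow (hr : r < 1 / 2) (p : ℝ) :
    Tendsto (fun ε : ℝ => ε ^ (-p) * ∫ u in {u : V | ε ^ r ≤ ‖u‖}, h (‖u‖ ^ 2 / ε) * ‖u‖ ^ k ∂μ)
      (𝓝[>] 0) (𝓝 0) := by
  set M := ∫ u, ‖u‖ ^ k * exp (-(c / 2) * ‖u‖ ^ 2) ∂μ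
  have h_bound := (tendsto_rpow_neg_mul_exp_neg_mul_rpow_neg (q := 1 - 2 * r) (by linarith)
    (half_pos hc) p).const_mul (C * M)
  rw [mul_zero] at h_bound
  refine squeeze_zero' ?_ ?_ h_bound
  · filter_upwards [self_mem_nhdsWithin] with ε (hε : 0 < ε)
    exact mul_nonneg (rpow_nonneg hε.le _)
      (setIntegral_nonneg (isClosed_le continuous_const continuous_norm).measurableSet
        fun u _ => by have := h_nonneg (‖u‖ ^ 2 / ε); positivity)
  · filter_upwards [Ioc_mem_nhdsGT zero_lt_one] with ε ⟨hε, hε1⟩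
    calc _ ≤ ε ^ (-p) * (C * exp (-(c / 2) * ε ^ (2 * r - 1)) * M) :=
          mul_le_mul_of_nonneg_left
            (setIntegral_norm_ge_rpow_le μ hC hc h_nonneg h_decay k r hε hε1)
            (rpow_nonneg hε.le _)
      _ = C * M * (ε ^ (-p) * exp (-(c / 2) * ε ^ (-(1 - 2 * r)))) := by
          rw [neg_sub]; ring

end Tail

theorem stmt14_general
    (d : ℕ)
    (h : ℝ → ℝ) (h_nonneg : ∀ u, 0 ≤ h u)
    (C c : ℝ) (hC : 0 < C) (hc : 0 < c)
    (h_decay : ∀ u : ℝ, 0 ≤ u → h u ≤ C * Real.exp (-c * u))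
    (k : ℕ) (N : ℝ) :
    Tendsto (fun ε : ℝ => ε ^ (-N) *
        ∫ u in {u : E d | ε ^ ((1 : ℝ) / 3) ≤ ‖u‖}, ε ^ (-(d : ℝ) / 2) * h (‖u‖ ^ 2 / ε) * ‖u‖ ^ k)
      (𝓝[>] (0 : ℝ)) (𝓝 0) := by
  refine (tendsto_rpow_neg_mul_setIntegral_norm_ge_rpow (volume : Measure (E d)) hC.le hc
    h_nonneg h_decay k (1 / 3) (by norm_num) (N + d / 2)).congr' ?_
  filter_upwards [self_mem_nhdsWithin] with ε (hε : 0 < ε)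
  simp_rw [mul_assoc, integral_const_mul]
  rw [← mul_assoc, ← rpow_add hε, neg_add, neg_div]

/-- Localization estimate: for every `k ≥ 0` and `N > 0`, the mass of
the rescaled kernel outside a ball of radius `ε^{1/3}`, weighted by `‖u‖^k`, vanishes
faster than any power of `ε`. -/
theorem stmt14
    (d : ℕ) (hd : 0 < d)
    (h : ℝ → ℝ) (h_nonneg : ∀ u, 0 ≤ h u) (h_cont : Continuous h)
    (C c : ℝ) (hC : 0 < C) (hc : 0 < c)
    (h_decay : ∀ u : ℝ, 0 ≤ u → h u ≤ C * Real.exp (-c * u))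
    (k : ℕ) (N : ℝ) (hN : 0 < N) :
    Tendsto (fun ε : ℝ => ε ^ (-N) *
        ∫ u in {u : E d | ε ^ ((1 : ℝ) / 3) ≤ ‖u‖}, ε ^ (-(d : ℝ) / 2) * h (‖u‖ ^ 2 / ε) * ‖u‖ ^ k)
      (𝓝[>] (0 : ℝ)) (𝓝 0) :=
  stmt14_general d h h_nonneg C c hC hc h_decay k N

end
end
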